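/- arXiv:2503.22611 — 4 statements merged into one kernel-verified Lean document; each statement's English description precedes it below -/
import Mathlib

section
/- If the energy forms e in H and ẽ in H̃ are δ-quasi-unitarily equivalent with identification operators J, J', J¹, J'¹, then for every z ∈ ℂ \ (spec Δ ∪ spec Δ̃) one has the resolvent intertwining estimate ‖(Δ̃ − z)⁻¹ J − J (Δ − z)⁻¹‖ ≤ C(z) δ, where C(z) := 4 (1 + |z+1| / d(z, spec Δ ∪ spec Δ̃))² and d denotes the Euclidean distance in ℂ. -/
open scoped ComplexConjugate

noncomputable section

/-- A non-negative self-adjoint operator in a complex Hilbert space `H`, packaged as a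
densely defined symmetric non-negative operator together with its (everywhere defined,
bounded) resolvent `res = (Δ + 1)⁻¹`. -/
structure NonnegOp (H : Type*) [NormedAddCommGroup H] [InnerProductSpace ℂ H]
    [CompleteSpace H] where
  domain : Submodule ℂ H
  dense : Dense (domain : Set H)
  op : domain →ₗ[ℂ] H
  symm : ∀ f g : domain, (inner ℂ (op f) (g : H) : ℂ) = inner ℂ (f : H) (op g)
  nonneg : ∀ f : domain, 0 ≤ (inner ℂ (op f) (f : H) : ℂ).re
  res : H →L[ℂ] H
  res_mem : ∀ u : H, res u ∈ domain
  op_res : ∀ u : H, op ⟨res u, res_mem u⟩ + res u = u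
  res_op : ∀ f : domain, res (op f + (f : H)) = f

/-- `Rz` is the resolvent `(Δ - z)⁻¹` of the operator `T` at the point `z`. -/
structure IsResolventAt {H : Type*} [NormedAddCommGroup H] [InnerProductSpace ℂ H]
    [CompleteSpace H] (T : NonnegOp H) (z : ℂ) (Rz : H →L[ℂ] H) : Prop where
  mem : ∀ u : H, Rz u ∈ T.domain
  right_inv : ∀ u : H, T.op ⟨Rz u, mem u⟩ - z • Rz u = u
  left_inv : ∀ f : T.domain, Rz (T.op f - z • (f : H)) = f

/-- The spectrum of `T`: the set of `z : ℂ` at which no bounded resolvent exists. -/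
def NonnegOp.spec {H : Type*} [NormedAddCommGroup H] [InnerProductSpace ℂ H]
    [CompleteSpace H] (T : NonnegOp H) : Set ℂ :=
  {z | ¬ ∃ Rz : H →L[ℂ] H, IsResolventAt T z Rz}


/-- An energy form in `H` with form domain `D`: a densely defined, closed, non-negative,
hermitian sesquilinear form (conjugate-linear in the first argument). -/
structure EnergyFormOn (H : Type*) [NormedAddCommGroup H] [InnerProductSpace ℂ H]
    [CompleteSpace H] (D : Submodule ℂ H) where
  dense : Dense (D : Set H)
  form : D → D → ℂ
  linear_right : ∀ f : D, IsLinearMap ℂ (form f)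
  conj_symm : ∀ f g : D, form g f = conj (form f g)
  nonneg : ∀ f : D, 0 ≤ (form f f).re
  closed : ∀ f : ℕ → D,
    (∀ ε : ℝ, 0 < ε → ∃ N : ℕ, ∀ p ≥ N, ∀ q ≥ N,
        ‖((f p : H)) - (f q : H)‖ ^ 2 + (form (f p - f q) (f p - f q)).re < ε) →
    ∃ g : D, Filter.Tendsto
        (fun n => ‖((f n : H)) - (g : H)‖ ^ 2 + (form (f n - g) (f n - g)).re)
        Filter.atTop (nhds 0)

/-- The form norm `‖f‖_e = (‖f‖² + e(f,f))^{1/2}`. -/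
def EnergyFormOn.enorm {H : Type*} [NormedAddCommGroup H] [InnerProductSpace ℂ H]
    [CompleteSpace H] {D : Submodule ℂ H} (E : EnergyFormOn H D) (f : D) : ℝ :=
  Real.sqrt (‖(f : H)‖ ^ 2 + (E.form f f).re)

/-- `T` is the non-negative self-adjoint operator associated with the energy form `E`
(first representation theorem). -/
structure IsAssociatedOp {H : Type*} [NormedAddCommGroup H] [InnerProductSpace ℂ H]
    [CompleteSpace H] {D : Submodule ℂ H} (E : EnergyFormOn H D) (T : NonnegOp H) : Prop where
  le : T.domain ≤ D
  compat : ∀ (f : T.domain) (u : D),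
    E.form ⟨(f : H), le f.2⟩ u = (inner ℂ (T.op f) (u : H) : ℂ)


/-- `δ`-quasi-unitary equivalence of the energy forms `E` and `E'` with identification
operators `J`, `J'` (on the Hilbert spaces) and `J1`, `J1'` (on the form domains). -/
structure FormQUE {H H' : Type*} [NormedAddCommGroup H] [InnerProductSpace ℂ H]
    [CompleteSpace H] [NormedAddCommGroup H'] [InnerProductSpace ℂ H'] [CompleteSpace H']
    {D : Submodule ℂ H} {D' : Submodule ℂ H'}
    (E : EnergyFormOn H D) (E' : EnergyFormOn H' D') (δ : ℝ)
    (J : H →L[ℂ] H') (J' : H' →L[ℂ] H)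
    (J1 : D →ₗ[ℂ] D') (J1' : D' →ₗ[ℂ] D) : Prop where
  bounded : ∀ f : H, ‖J f‖ ≤ (1 + δ) * ‖f‖
  almost_adjoint : ∀ (f : H) (u : H'),
    ‖(inner ℂ (J f) u : ℂ) - (inner ℂ f (J' u) : ℂ)‖ ≤ δ * ‖f‖ * ‖u‖
  inv_left : ∀ f : D, ‖(f : H) - J' (J (f : H))‖ ≤ δ * E.enorm f
  inv_right : ∀ u : D', ‖(u : H') - J (J' (u : H'))‖ ≤ δ * E'.enorm u
  compat_left : ∀ f : D, ‖((J1 f : H')) - J (f : H)‖ ≤ δ * E.enorm f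
  compat_right : ∀ u : D', ‖((J1' u : H)) - J' (u : H')‖ ≤ δ * E'.enorm u
  close : ∀ (f : D) (u : D'),
    ‖E'.form (J1 f) u - E.form f (J1' u)‖ ≤ δ * E.enorm f * E'.enorm u


/-!
At `z = -1` one tests `(Δ̃ + 1)⁻¹J - J(Δ + 1)⁻¹` against `u` and writes `f = (Δ + 1)g`,
`u = (Δ̃ + 1)w`. The cross terms `⟪Jg, w⟫` cancel and what remains telescopes through `J'`, `J'¹`,
the two forms and `J¹`; each of the four differences is at most `δ‖f‖‖u‖` by one axiom of
quasi-unitary equivalence, since `‖Δg‖`, `‖g‖_e`, `‖Δ̃w‖` and `‖w‖_ẽ` are bounded by `‖f‖` and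
`‖u‖`. This gives the bound `4δ`. For general `z`, the first resolvent identity factors
`R̃_z J - J R_z = (1 + (z + 1)R̃_z)((Δ̃ + 1)⁻¹J - J(Δ + 1)⁻¹)(1 + (z + 1)R_z)`. Resolvents are
normal, so their norm is their spectral radius. Their nonzero spectral values are the numbers
`(λ - z)⁻¹` with `λ` in the spectrum of the operator, so `‖R_z‖ ≤ 1 / d(z, spec Δ)`.
-/

open ContinuousLinearMap

section Resolvent

variable {H : Type*} [NormedAddCommGroup H] [InnerProductSpace ℂ H] [CompleteSpace H]
  {T : NonnegOp H} {z w : ℂ} {R S : H →L[ℂ] H}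

theorem NonnegOp.isResolventAt_res (T : NonnegOp H) : IsResolventAt T (-1) T.res where
  mem := T.res_mem
  right_inv u := by simpa using T.op_res u
  left_inv f := by simpa using T.res_op f

theorem IsResolventAt.notMem_spec (hR : IsResolventAt T z R) : z ∉ T.spec :=
  fun h => h ⟨R, hR⟩

theorem IsResolventAt.sub_eq_smul_mul (hR : IsResolventAt T z R) (hS : IsResolventAt T w S) :
    R - S = (z - w) • (R * S) := by
  ext u
  have hSu : T.op ⟨S u, hS.mem u⟩ - z • S u = u + (w - z) • S u := by
    linear_combination (norm := module) hS.right_inv u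
  have h : R u + (w - z) • R (S u) = S u := by
    simpa [hSu] using hR.left_inv ⟨S u, hS.mem u⟩
  simp only [sub_apply, smul_apply, mul_apply_eq_comp]
  linear_combination (norm := module) h

theorem IsResolventAt.sub_eq_smul_mul' (hR : IsResolventAt T z R) (hS : IsResolventAt T w S) :
    R - S = (z - w) • (S * R) := by
  rw [← neg_sub, hS.sub_eq_smul_mul hR, ← neg_smul, neg_sub]

theorem IsResolventAt.unique (hR : IsResolventAt T z R) (hS : IsResolventAt T z S) : R = S :=
  sub_eq_zero.1 <| by simpa using hR.sub_eq_smul_mul hS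

theorem IsResolventAt.commute (hR : IsResolventAt T z R) (hS : IsResolventAt T w S) :
    Commute R S := by
  rcases eq_or_ne z w with rfl | hzw
  · exact hR.unique hS ▸ Commute.refl S
  · exact smul_right_injective _ (sub_ne_zero.2 hzw)
      ((hR.sub_eq_smul_mul hS).symm.trans (hR.sub_eq_smul_mul' hS))

theorem IsResolventAt.add_inv_mem_spec (hR : IsResolventAt T z R) {μ : ℂ}
    (hμ : μ ∈ spectrum ℂ R) (hμ0 : μ ≠ 0) : z + μ⁻¹ ∈ T.spec := by
  rintro ⟨S, hS⟩
  have hRS := hR.sub_eq_smul_mul hS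
  have hSR := hR.sub_eq_smul_mul' hS
  rw [sub_add_cancel_left] at hRS hSR
  -- `(μ - R)⁻¹ = μ⁻¹ + μ⁻² S`, by the resolvent identity `R - S = -μ⁻¹ R S = -μ⁻¹ S R`
  refine hμ (isUnit_iff_exists.2 ⟨μ⁻¹ • 1 + μ⁻¹ ^ 2 • S, ?_, ?_⟩)
  · rw [Algebra.algebraMap_eq_smul_one]
    simp only [sub_mul, mul_add, one_mul, mul_one, smul_mul_assoc, mul_smul_comm]
    linear_combination (norm := skip) (-μ⁻¹) • hRS
    match_scalars <;> field_simp <;> ring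
  · rw [Algebra.algebraMap_eq_smul_one]
    simp only [mul_sub, add_mul, one_mul, mul_one, smul_mul_assoc, mul_smul_comm]
    linear_combination (norm := skip) (-μ⁻¹) • hSR
    match_scalars <;> field_simp <;> ring

theorem IsResolventAt.of_isUnit (hR : IsResolventAt T z R) (hU : IsUnit (1 - (w - z) • R)) :
    IsResolventAt T w (R * Ring.inverse (1 - (w - z) • R)) := by
  set U := 1 - (w - z) • R
  set V := Ring.inverse U
  have hUV : U * V = 1 := Ring.mul_inverse_cancel U hU
  have hVU : V * U = 1 := Ring.inverse_mul_cancel U hU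
  have hRU : R * U = U * R := ((Commute.one_right R).sub_right ((Commute.refl R).smul_right _)).eq
  have hRV : R * V = V * R := calc
    R * V = V * (U * R) * V := by rw [← mul_assoc, hVU, one_mul]
    _ = V * R * (U * V) := by rw [← hRU]; simp only [mul_assoc]
    _ = V * R := by rw [hUV, mul_one]
  refine ⟨fun u => hR.mem (V u), fun u => ?_, fun f => ?_⟩
  · calc T.op ⟨R (V u), hR.mem (V u)⟩ - w • R (V u)
        = (T.op ⟨R (V u), hR.mem (V u)⟩ - z • R (V u)) - (w - z) • R (V u) := by module
      _ = U (V u) := by rw [hR.right_inv]; simp [U]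
      _ = u := by rw [← mul_apply_eq_comp, hUV, one_apply_eq_self]
  · calc (R * V) (T.op f - w • (f : H))
        = V (R ((T.op f - z • (f : H)) - (w - z) • (f : H))) := by
          rw [hRV, mul_apply_eq_comp]; congr 2; module
      _ = V (U f) := by rw [map_sub, hR.left_inv, map_smul]; simp [U]
      _ = f := by rw [← mul_apply_eq_comp, hVU, one_apply_eq_self]

theorem NonnegOp.isClosed_spec (T : NonnegOp H) : IsClosed T.spec := by
  refine isOpen_compl_iff.1 (isOpen_iff_mem_nhds.2 fun z hz => ?_)
  obtain ⟨R, hR⟩ := not_not.1 hz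
  have hopen : IsOpen {w : ℂ | IsUnit (1 - (w - z) • R)} :=
    Units.isOpen.preimage (by fun_prop)
  exact Filter.mem_of_superset (hopen.mem_nhds (by simp)) fun w hw => (hR.of_isUnit hw).notMem_spec

theorem NonnegOp.inner_res_left (T : NonnegOp H) (x y : H) :
    inner ℂ (T.res x) y = inner ℂ x (T.res y) := by
  conv_lhs => rw [← T.op_res y]
  conv_rhs => rw [← T.op_res x]
  rw [inner_add_right, inner_add_left]
  exact congrArg (· + _) (T.symm ⟨_, T.res_mem x⟩ ⟨_, T.res_mem y⟩).symm

theorem NonnegOp.isSelfAdjoint_res (T : NonnegOp H) : IsSelfAdjoint T.res :=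
  isSelfAdjoint_iff_isSymmetric.2 T.inner_res_left

theorem IsResolventAt.adjoint (hR : IsResolventAt T z R) :
    IsResolventAt T (conj z) (ContinuousLinearMap.adjoint R) := by
  rw [← star_eq_adjoint]
  have hstar : ∀ u, star R u = T.res (u + (conj z + 1) • star R u) := fun u => by
    have h := congrArg star (hR.sub_eq_smul_mul T.isResolventAt_res)
    rw [star_sub, star_smul, star_mul, T.isSelfAdjoint_res.star_eq, sub_neg_eq_add,
      sub_eq_iff_eq_add] at h
    rw [map_add, map_smul, add_comm]
    simpa using congrArg (· u) h
  have hmem : ∀ u, star R u ∈ T.domain := fun u => hstar u ▸ T.res_mem _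
  refine ⟨hmem, fun u => ?_, fun f => ext_inner_right ℂ fun h => ?_⟩
  · have hop : T.op ⟨star R u, hmem u⟩ = u + (conj z + 1) • star R u - star R u := by
      have hsub : (⟨star R u, hmem u⟩ : T.domain) = ⟨T.res _, T.res_mem _⟩ := Subtype.ext (hstar u)
      rw [hsub, eq_sub_of_add_eq (T.op_res _), ← hstar u]
    rw [hop]; module
  · have hsymm : inner ℂ (T.op f) (R h) = inner ℂ (f : H) (T.op ⟨R h, hR.mem h⟩) :=
      T.symm f ⟨R h, hR.mem h⟩
    rw [star_eq_adjoint, adjoint_inner_left, inner_sub_left, inner_smul_left, Complex.conj_conj,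
      hsymm, ← inner_smul_right, ← inner_sub_right, hR.right_inv]

theorem IsResolventAt.isStarNormal (hR : IsResolventAt T z R) : IsStarNormal R :=
  (isStarNormal_iff R).2 (star_eq_adjoint R ▸ hR.adjoint.commute hR)

theorem IsResolventAt.ne_zero [Nontrivial H] (hR : IsResolventAt T z R) : R ≠ 0 := by
  rintro rfl
  have hbot : T.domain = ⊥ :=
    eq_bot_iff.2 fun f hf => by simpa using (hR.left_inv ⟨f, hf⟩).symm
  obtain ⟨x, hx⟩ := exists_ne (0 : H)
  exact hx (by simpa [hbot] using T.dense x)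

theorem NonnegOp.spec_nonempty [Nontrivial H] (T : NonnegOp H) : T.spec.Nonempty := by
  have hres := T.isResolventAt_res
  have := hres.isStarNormal
  obtain ⟨μ, hμ, hμr⟩ := spectrum.exists_nnnorm_eq_spectralRadius T.res
  have hμ0 : μ ≠ 0 := by
    rintro rfl
    rw [IsStarNormal.spectralRadius_eq_nnnorm] at hμr
    exact hres.ne_zero (by simpa using hμr.symm)
  exact ⟨_, hres.add_inv_mem_spec hμ hμ0⟩

theorem IsResolventAt.norm_le_inv_infDist (hR : IsResolventAt T z R) {s : Set ℂ}
    (hs : T.spec ⊆ s) (hd : 0 < Metric.infDist z s) : ‖R‖ ≤ (Metric.infDist z s)⁻¹ := by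
  have := hR.isStarNormal
  have hspec : ∀ μ ∈ spectrum ℂ R, ‖μ‖ ≤ (Metric.infDist z s)⁻¹ := fun μ hμ => by
    rcases eq_or_ne μ 0 with rfl | hμ0
    · simpa using hd.le
    have := Metric.infDist_le_dist_of_mem (x := z) (hs (hR.add_inv_mem_spec hμ hμ0))
    rw [dist_self_add_right, norm_inv] at this
    exact (le_inv_comm₀ hd (norm_pos_iff.2 hμ0)).1 this
  have hsr : spectralRadius ℂ R ≤ ENNReal.ofReal (Metric.infDist z s)⁻¹ :=
    iSup₂_le fun μ hμ => by
      rw [← enorm_eq_nnnorm, ← ofReal_norm]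
      exact ENNReal.ofReal_le_ofReal (hspec μ hμ)
  rwa [IsStarNormal.spectralRadius_eq_nnnorm, ← enorm_eq_nnnorm, ← ofReal_norm,
    ENNReal.ofReal_le_ofReal_iff (by positivity)] at hsr

theorem IsResolventAt.norm_one_add_smul_le (hR : IsResolventAt T z R) (c : ℂ) {s : Set ℂ}
    (hs : T.spec ⊆ s) (hd : 0 < Metric.infDist z s) :
    ‖1 + c • R‖ ≤ 1 + ‖c‖ / Metric.infDist z s := calc
  ‖1 + c • R‖ ≤ ‖(1 : H →L[ℂ] H)‖ + ‖c‖ * ‖R‖ := (norm_add_le _ _).trans_eq (by rw [norm_smul])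
  _ ≤ 1 + ‖c‖ * (Metric.infDist z s)⁻¹ := by
    gcongr
    exacts [norm_id_le, hR.norm_le_inv_infDist hs hd]
  _ = 1 + ‖c‖ / Metric.infDist z s := by rw [div_eq_mul_inv]

end Resolvent

section EnergyForm

variable {H : Type*} [NormedAddCommGroup H] [InnerProductSpace ℂ H] [CompleteSpace H]

theorem NonnegOp.norm_sq_eq_op_res_add_res (T : NonnegOp H) (f : H) :
    ‖f‖ ^ 2 = ‖T.op ⟨T.res f, T.res_mem f⟩‖ ^ 2
      + 2 * (inner ℂ (T.op ⟨T.res f, T.res_mem f⟩) (T.res f)).re + ‖T.res f‖ ^ 2 := by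
  conv_lhs => rw [← T.op_res f]
  exact norm_add_sq (𝕜 := ℂ) _ _

theorem NonnegOp.norm_op_res_le (T : NonnegOp H) (f : H) :
    ‖T.op ⟨T.res f, T.res_mem f⟩‖ ≤ ‖f‖ :=
  (sq_le_sq₀ (norm_nonneg _) (norm_nonneg _)).1 <| by
    nlinarith [T.norm_sq_eq_op_res_add_res f, T.nonneg ⟨_, T.res_mem f⟩]

theorem NonnegOp.norm_res_le (T : NonnegOp H) (f : H) : ‖T.res f‖ ≤ ‖f‖ :=
  (sq_le_sq₀ (norm_nonneg _) (norm_nonneg _)).1 <| by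
    nlinarith [T.norm_sq_eq_op_res_add_res f, T.nonneg ⟨_, T.res_mem f⟩]

theorem IsAssociatedOp.enorm_res_le {D : Submodule ℂ H} {E : EnergyFormOn H D} {T : NonnegOp H}
    (hT : IsAssociatedOp E T) (f : H) : E.enorm ⟨T.res f, hT.le (T.res_mem f)⟩ ≤ ‖f‖ := by
  rw [EnergyFormOn.enorm, Real.sqrt_le_left (norm_nonneg f), hT.compat ⟨_, T.res_mem f⟩]
  nlinarith [T.norm_sq_eq_op_res_add_res f, T.nonneg ⟨_, T.res_mem f⟩]

end EnergyForm

section TwoSpaces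

variable {H H' : Type*}
  [NormedAddCommGroup H] [InnerProductSpace ℂ H] [CompleteSpace H]
  [NormedAddCommGroup H'] [InnerProductSpace ℂ H'] [CompleteSpace H']
  {T : NonnegOp H} {T' : NonnegOp H'}

theorem IsResolventAt.comp_sub_comp_eq {z w : ℂ} {R S : H →L[ℂ] H} {R' S' : H' →L[ℂ] H'}
    (hR : IsResolventAt T z R) (hS : IsResolventAt T w S)
    (hR' : IsResolventAt T' z R') (hS' : IsResolventAt T' w S') (J : H →L[ℂ] H') :
    R'.comp J - J.comp R =
      (1 + (z - w) • R').comp ((S'.comp J - J.comp S).comp (1 + (z - w) • R)) := by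
  have hSP : S.comp (1 + (z - w) • R) = R := by
    rw [← mul_def, mul_add, mul_one, mul_smul_comm, ← hR.sub_eq_smul_mul' hS, add_sub_cancel]
  have hPS' : (1 + (z - w) • R').comp S' = R' := by
    rw [← mul_def, add_mul, one_mul, smul_mul_assoc, ← hR'.sub_eq_smul_mul hS', add_sub_cancel]
  rw [sub_comp, comp_sub, ← comp_assoc, ← comp_assoc, hPS', comp_assoc, comp_assoc J, hSP]
  simp only [comp_add, add_comp, comp_smul, smul_comp, one_def, comp_id, id_comp]
  abel

variable {D : Submodule ℂ H} {D' : Submodule ℂ H'} {E : EnergyFormOn H D} {E' : EnergyFormOn H' D'}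
  {δ : ℝ} {J : H →L[ℂ] H'} {J' : H' →L[ℂ] H} {J1 : D →ₗ[ℂ] D'} {J1' : D' →ₗ[ℂ] D}

theorem FormQUE.norm_inner_res_comp_sub_le (hQUE : FormQUE E E' δ J J' J1 J1')
    (hT : IsAssociatedOp E T) (hT' : IsAssociatedOp E' T') (hδ : 0 ≤ δ) (f : H) (u : H') :
    ‖inner ℂ (T'.res (J f) - J (T.res f)) u‖ ≤ 4 * δ * ‖f‖ * ‖u‖ := by
  set g : D := ⟨T.res f, hT.le (T.res_mem f)⟩
  set w : D' := ⟨T'.res u, hT'.le (T'.res_mem u)⟩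
  set k := T.op ⟨T.res f, T.res_mem f⟩
  set m := T'.op ⟨T'.res u, T'.res_mem u⟩
  have hk : ‖k‖ ≤ ‖f‖ := T.norm_op_res_le f
  have hm : ‖m‖ ≤ ‖u‖ := T'.norm_op_res_le u
  have hw : ‖(w : H')‖ ≤ ‖u‖ := T'.norm_res_le u
  have hge : E.enorm g ≤ ‖f‖ := hT.enorm_res_le f
  have hwe : E'.enorm w ≤ ‖u‖ := hT'.enorm_res_le u
  have hsplit : inner ℂ (T'.res (J f) - J (T.res f)) u =
      (inner ℂ (J k) (w : H') - inner ℂ k (J' w)) + inner ℂ k (J' w - J1' w)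
        + (E.form g (J1' w) - E'.form (J1 g) w) + inner ℂ ((J1 g : H') - J g) m := by
    have hf : inner ℂ (J f) (w : H') = inner ℂ (J k) (w : H') + inner ℂ (J g) (w : H') := by
      rw [← inner_add_left, ← map_add]; exact congrArg (inner ℂ · _) (congrArg J (T.op_res f).symm)
    have hu : inner ℂ (J g) u = inner ℂ (J g) m + inner ℂ (J g) (w : H') := by
      rw [← inner_add_right]; exact congrArg (inner ℂ _) (T'.op_res u).symm
    have hform : E.form g (J1' w) = inner ℂ k (J1' w : H) :=
      hT.compat ⟨T.res f, T.res_mem f⟩ (J1' w)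
    have hform' : E'.form (J1 g) w = inner ℂ (J1 g : H') m := by
      rw [E'.conj_symm, hT'.compat ⟨T'.res u, T'.res_mem u⟩ (J1 g), inner_conj_symm]
    rw [inner_sub_left, T'.inner_res_left, inner_sub_right, inner_sub_left, hform, hform']
    linear_combination hf - hu
  have hwe0 : 0 ≤ E'.enorm w := Real.sqrt_nonneg _
  have hJ' : ‖inner ℂ (J k) (w : H') - inner ℂ k (J' w)‖ ≤ δ * ‖f‖ * ‖u‖ :=
    (hQUE.almost_adjoint k w).trans (by gcongr)
  have hJ1' : ‖inner ℂ k (J' w - J1' w)‖ ≤ δ * ‖f‖ * ‖u‖ := calc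
    _ ≤ ‖k‖ * ‖J' w - J1' w‖ := norm_inner_le_norm _ _
    _ ≤ ‖f‖ * (δ * ‖u‖) := by
      gcongr
      exact (norm_sub_rev _ _).trans_le ((hQUE.compat_right w).trans (by gcongr))
    _ = δ * ‖f‖ * ‖u‖ := by ring
  have hforms : ‖E.form g (J1' w) - E'.form (J1 g) w‖ ≤ δ * ‖f‖ * ‖u‖ := by
    rw [norm_sub_rev]
    exact (hQUE.close g w).trans (by gcongr)
  have hJ1 : ‖inner ℂ ((J1 g : H') - J g) m‖ ≤ δ * ‖f‖ * ‖u‖ := calc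
    _ ≤ ‖(J1 g : H') - J g‖ * ‖m‖ := norm_inner_le_norm _ _
    _ ≤ δ * ‖f‖ * ‖u‖ := by
      gcongr
      exact (hQUE.compat_left g).trans (by gcongr)
  rw [hsplit]
  refine norm_add₄_le.trans ?_
  linarith

theorem FormQUE.norm_res_comp_sub_comp_res_le (hQUE : FormQUE E E' δ J J' J1 J1')
    (hT : IsAssociatedOp E T) (hT' : IsAssociatedOp E' T') (hδ : 0 ≤ δ) :
    ‖T'.res.comp J - J.comp T.res‖ ≤ 4 * δ := by
  refine opNorm_le_bound _ (by positivity) fun f => ?_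
  set v := (T'.res.comp J - J.comp T.res) f
  have hv : ‖v‖ ^ 2 ≤ 4 * δ * ‖f‖ * ‖v‖ := by
    have h : ‖inner ℂ v v‖ ≤ 4 * δ * ‖f‖ * ‖v‖ := hQUE.norm_inner_res_comp_sub_le hT hT' hδ f v
    simpa [inner_self_eq_norm_sq_to_K] using h
  have : 0 ≤ 4 * δ * ‖f‖ := by positivity
  nlinarith [norm_nonneg v]

end TwoSpaces

theorem formQUE_resolvent_estimate_general
    {H H' : Type*}
    [NormedAddCommGroup H] [InnerProductSpace ℂ H] [CompleteSpace H]
    [NormedAddCommGroup H'] [InnerProductSpace ℂ H'] [CompleteSpace H']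
    {D : Submodule ℂ H} {D' : Submodule ℂ H'}
    (E : EnergyFormOn H D) (E' : EnergyFormOn H' D')
    (T : NonnegOp H) (T' : NonnegOp H')
    (hT : IsAssociatedOp E T) (hT' : IsAssociatedOp E' T')
    (δ : ℝ) (hδ : 0 ≤ δ)
    (J : H →L[ℂ] H') (J' : H' →L[ℂ] H)
    (J1 : D →ₗ[ℂ] D') (J1' : D' →ₗ[ℂ] D)
    (hQUE : FormQUE E E' δ J J' J1 J1')
    (z : ℂ)
    (Rz : H →L[ℂ] H) (Rz' : H' →L[ℂ] H')
    (hRz : IsResolventAt T z Rz) (hRz' : IsResolventAt T' z Rz') :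
    ‖Rz'.comp J - J.comp Rz‖ ≤
      (4 * (1 + ‖z + 1‖ / Metric.infDist z (T.spec ∪ T'.spec)) ^ 2) * δ := by
  rcases subsingleton_or_nontrivial H with hH | hH
  · have h0 : Rz'.comp J - J.comp Rz = 0 := ext fun f => by simp [Subsingleton.elim f 0]
    rw [h0, norm_zero]
    positivity
  set d := Metric.infDist z (T.spec ∪ T'.spec)
  have hd : 0 < d := (T.isClosed_spec.union T'.isClosed_spec).notMem_iff_infDist_pos
    (T.spec_nonempty.mono Set.subset_union_left) |>.1 fun h =>
      h.elim hRz.notMem_spec hRz'.notMem_spec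
  have hP := hRz.norm_one_add_smul_le (z + 1) Set.subset_union_left hd
  have hP' := hRz'.norm_one_add_smul_le (z + 1) Set.subset_union_right hd
  have hK := hQUE.norm_res_comp_sub_comp_res_le hT hT' hδ
  rw [hRz.comp_sub_comp_eq T.isResolventAt_res hRz' T'.isResolventAt_res J, sub_neg_eq_add]
  calc _ ≤ ‖1 + (z + 1) • Rz'‖ * (‖T'.res.comp J - J.comp T.res‖ * ‖1 + (z + 1) • Rz‖) :=
        (opNorm_comp_le _ _).trans (by gcongr; exact opNorm_comp_le _ _)
    _ ≤ (1 + ‖z + 1‖ / d) * (4 * δ * (1 + ‖z + 1‖ / d)) := by gcongr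
    _ = 4 * (1 + ‖z + 1‖ / d) ^ 2 * δ := by ring

/-- [Post–Simmer, Prp. `q-u-e.qf.op`, resolvent estimate].
If the energy forms `E` (in `H`, with associated operator `Δ = T`) and `E'` (in `H'`,
with associated operator `Δ̃ = T'`) are `δ`-quasi-unitarily equivalent with
identification operators `J`, `J'`, `J¹`, `J'¹`, then for every
`z ∈ ℂ \ (spec Δ ∪ spec Δ̃)` the resolvents `Rz = (Δ - z)⁻¹` and `Rz' = (Δ̃ - z)⁻¹`
satisfy `‖Rz' J - J Rz‖ ≤ C(z) δ` with
`C(z) = 4 (1 + |z+1| / d(z, spec Δ ∪ spec Δ̃))²`. -/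
theorem formQUE_resolvent_estimate
    {H H' : Type*}
    [NormedAddCommGroup H] [InnerProductSpace ℂ H] [CompleteSpace H]
    [NormedAddCommGroup H'] [InnerProductSpace ℂ H'] [CompleteSpace H']
    {D : Submodule ℂ H} {D' : Submodule ℂ H'}
    (E : EnergyFormOn H D) (E' : EnergyFormOn H' D')
    (T : NonnegOp H) (T' : NonnegOp H')
    (hT : IsAssociatedOp E T) (hT' : IsAssociatedOp E' T')
    (δ : ℝ) (hδ : 0 ≤ δ)
    (J : H →L[ℂ] H') (J' : H' →L[ℂ] H)
    (J1 : D →ₗ[ℂ] D') (J1' : D' →ₗ[ℂ] D)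
    (hQUE : FormQUE E E' δ J J' J1 J1')
    (z : ℂ) (hz : z ∉ T.spec ∪ T'.spec)
    (Rz : H →L[ℂ] H) (Rz' : H' →L[ℂ] H')
    (hRz : IsResolventAt T z Rz) (hRz' : IsResolventAt T' z Rz') :
    ‖Rz'.comp J - J.comp Rz‖ ≤
      (4 * (1 + ‖z + 1‖ / Metric.infDist z (T.spec ∪ T'.spec)) ^ 2) * δ :=
  formQUE_resolvent_estimate_general E E' T T' hT hT' δ hδ J J' J1 J1' hQUE z Rz Rz' hRz hRz'
end
end

section
/- If the energy forms e in H and ẽ in H̃ are δ-quasi-unitarily equivalent with identification operators J, J', J¹, J'¹, then the associated non-negative self-adjoint operators Δ and Δ̃ are 4δ-operator-quasi-unitarily equivalent with identification operators J and J'; in particular ‖(Δ̃+1)⁻¹ J − J (Δ+1)⁻¹‖ ≤ 4δ. -/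
open scoped ComplexConjugate

noncomputable section

/-- `δ`-operator-quasi-unitary equivalence of `T` and `T'` with identification
operators `J` and `J'`. -/
structure OpQUE {H H' : Type*} [NormedAddCommGroup H] [InnerProductSpace ℂ H]
    [CompleteSpace H] [NormedAddCommGroup H'] [InnerProductSpace ℂ H'] [CompleteSpace H']
    (T : NonnegOp H) (T' : NonnegOp H') (δ : ℝ)
    (J : H →L[ℂ] H') (J' : H' →L[ℂ] H) : Prop where
  norm_J : ‖J‖ ≤ 1 + δ
  adjoint_close : ‖ContinuousLinearMap.adjoint J - J'‖ ≤ δ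
  inv_left : ‖(ContinuousLinearMap.id ℂ H - J'.comp J).comp T.res‖ ≤ δ
  inv_right : ‖(ContinuousLinearMap.id ℂ H' - J.comp J').comp T'.res‖ ≤ δ
  intertwine : ‖T'.res.comp J - J.comp T.res‖ ≤ δ

/-!
For `f = (Δ+1)⁻¹ g` and `v = (Δ̃+1)⁻¹ u`, the first representation theorem turns
`⟪(Δ̃+1)⁻¹ J g - J¹ f, u⟫` into `e(f, J'¹ v) - ẽ(J¹ f, v)` plus three terms, each controlled by one
axiom of quasi-unitary equivalence. Since `‖f‖_e² + ‖Δ f‖² ≤ ‖g‖²` and `‖v‖ ≤ ‖v‖_ẽ ≤ ‖u‖`, this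
gives `‖(Δ̃+1)⁻¹ J g - J f‖ ≤ δ (3 ‖f‖_e + 2 ‖Δ f‖) ≤ 4 δ ‖g‖`. The remaining estimates of
operator-quasi-unitary equivalence only need `‖(Δ+1)⁻¹ g‖_e ≤ ‖g‖`.
-/

open scoped InnerProductSpace

section InnerProductSpace

variable {𝕜 E F : Type*} [RCLike 𝕜] [NormedAddCommGroup E] [InnerProductSpace 𝕜 E]
  [NormedAddCommGroup F] [InnerProductSpace 𝕜 F]

theorem norm_le_of_forall_norm_inner_le (x : E) {M : ℝ} (hM : 0 ≤ M)
    (h : ∀ y, ‖⟪x, y⟫_𝕜‖ ≤ M * ‖y‖) : ‖x‖ ≤ M := by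
  rw [← innerSL_apply_norm 𝕜 x]
  exact ContinuousLinearMap.opNorm_le_bound _ hM h

theorem ContinuousLinearMap.norm_adjoint_sub_le [CompleteSpace E] [CompleteSpace F]
    (A : E →L[𝕜] F) (B : F →L[𝕜] E) {δ : ℝ} (hδ : 0 ≤ δ)
    (h : ∀ x y, ‖⟪A x, y⟫_𝕜 - ⟪x, B y⟫_𝕜‖ ≤ δ * ‖x‖ * ‖y‖) :
    ‖adjoint A - B‖ ≤ δ := by
  refine opNorm_le_bound _ hδ fun y ↦
    norm_le_of_forall_norm_inner_le (𝕜 := 𝕜) _ (by positivity) fun x ↦ ?_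
  rw [← norm_inner_symm, sub_apply, inner_sub_right, adjoint_inner_right, mul_right_comm]
  exact h x y

end InnerProductSpace

section Resolvent

variable {H : Type*} [NormedAddCommGroup H] [InnerProductSpace ℂ H] [CompleteSpace H]

namespace NonnegOp

variable (T : NonnegOp H)

def resDom (g : H) : T.domain := ⟨T.res g, T.res_mem g⟩

@[simp]
theorem coe_resDom (g : H) : (T.resDom g : H) = T.res g := rfl

theorem op_resDom_add_res (g : H) : T.op (T.resDom g) + T.res g = g := T.op_res g

theorem inner_res_left_s2 (u w : H) : ⟪T.res u, w⟫_ℂ = ⟪u, T.res w⟫_ℂ := by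
  calc ⟪T.res u, w⟫_ℂ = ⟪T.res u, T.op (T.resDom w) + T.res w⟫_ℂ := by
        rw [T.op_resDom_add_res]
    _ = ⟪T.op (T.resDom u) + T.res u, T.res w⟫_ℂ := by
        rw [inner_add_right, inner_add_left, ← T.coe_resDom u, ← T.coe_resDom w,
          T.symm (T.resDom u) (T.resDom w)]
    _ = ⟪u, T.res w⟫_ℂ := by rw [T.op_resDom_add_res]

end NonnegOp

namespace EnergyFormOn

variable {D : Submodule ℂ H} (E : EnergyFormOn H D)

theorem enorm_nonneg (f : D) : 0 ≤ E.enorm f := Real.sqrt_nonneg _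

theorem norm_le_enorm (f : D) : ‖(f : H)‖ ≤ E.enorm f :=
  Real.le_sqrt_of_sq_le (le_add_of_nonneg_right (E.nonneg f))

end EnergyFormOn

namespace IsAssociatedOp

variable {D : Submodule ℂ H} {E : EnergyFormOn H D} {T : NonnegOp H}
  (hT : IsAssociatedOp E T)

def resForm (g : H) : D := ⟨T.res g, hT.le (T.res_mem g)⟩

@[simp]
theorem coe_resForm (g : H) : (hT.resForm g : H) = T.res g := rfl

theorem form_resForm_left (g : H) (u : D) :
    E.form (hT.resForm g) u = ⟪T.op (T.resDom g), u⟫_ℂ :=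
  hT.compat (T.resDom g) u

theorem form_resForm_right (u : D) (g : H) :
    E.form u (hT.resForm g) = ⟪(u : H), T.op (T.resDom g)⟫_ℂ := by
  rw [E.conj_symm, hT.form_resForm_left, inner_conj_symm]

theorem enorm_resForm_sq_add_norm_op_sq_le (g : H) :
    E.enorm (hT.resForm g) ^ 2 + ‖T.op (T.resDom g)‖ ^ 2 ≤ ‖g‖ ^ 2 := by
  have hre : 0 ≤ RCLike.re ⟪T.op (T.resDom g), T.res g⟫_ℂ := T.nonneg _
  have hexpand := norm_add_sq (𝕜 := ℂ) (T.op (T.resDom g)) (T.res g)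
  rw [T.op_resDom_add_res] at hexpand
  rw [EnergyFormOn.enorm, Real.sq_sqrt (add_nonneg (sq_nonneg _) (E.nonneg _)),
    hT.form_resForm_left, coe_resForm]
  simp only [RCLike.re_to_complex] at hre hexpand ⊢
  linarith

theorem enorm_resForm_le (g : H) : E.enorm (hT.resForm g) ≤ ‖g‖ :=
  (sq_le_sq₀ (E.enorm_nonneg _) (norm_nonneg g)).1 <|
    (le_add_of_nonneg_right (sq_nonneg _)).trans (hT.enorm_resForm_sq_add_norm_op_sq_le g)

theorem opNorm_comp_res_le (hT : IsAssociatedOp E T) {F : Type*} [SeminormedAddCommGroup F]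
    [NormedSpace ℂ F] (B : H →L[ℂ] F) {δ : ℝ} (hδ : 0 ≤ δ) (hB : ∀ f : D, ‖B f‖ ≤ δ * E.enorm f) :
    ‖B.comp T.res‖ ≤ δ :=
  ContinuousLinearMap.opNorm_le_bound _ hδ fun g ↦
    (hB (hT.resForm g)).trans (by gcongr; exact hT.enorm_resForm_le g)

end IsAssociatedOp

end Resolvent

section Intertwining

variable {H H' : Type*} [NormedAddCommGroup H] [InnerProductSpace ℂ H] [CompleteSpace H]
  [NormedAddCommGroup H'] [InnerProductSpace ℂ H'] [CompleteSpace H']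
  {D : Submodule ℂ H} {D' : Submodule ℂ H'} {E : EnergyFormOn H D} {E' : EnergyFormOn H' D'}
  {T : NonnegOp H} {T' : NonnegOp H'}

theorem IsAssociatedOp.inner_res_comp_sub_eq (hT : IsAssociatedOp E T)
    (hT' : IsAssociatedOp E' T') (J : H →L[ℂ] H') (J' : H' →L[ℂ] H)
    (J1 : D →ₗ[ℂ] D') (J1' : D' →ₗ[ℂ] D) (g : H) (u : H') :
    ⟪T'.res (J g) - J1 (hT.resForm g), u⟫_ℂ =
      (E.form (hT.resForm g) (J1' (hT'.resForm u)) - E'.form (J1 (hT.resForm g)) (hT'.resForm u))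
      + ⟪T.op (T.resDom g), J' (T'.res u) - J1' (hT'.resForm u)⟫_ℂ
      + (⟪J (T.op (T.resDom g)), T'.res u⟫_ℂ - ⟪T.op (T.resDom g), J' (T'.res u)⟫_ℂ)
      + ⟪J (T.res g) - J1 (hT.resForm g), T'.res u⟫_ℂ := by
  have hJg : J g = J (T.op (T.resDom g)) + J (T.res g) := by
    rw [← map_add, T.op_resDom_add_res]
  have hJ1u : ⟪(J1 (hT.resForm g) : H'), u⟫_ℂ =
      E'.form (J1 (hT.resForm g)) (hT'.resForm u) + ⟪(J1 (hT.resForm g) : H'), T'.res u⟫_ℂ := by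
    conv_lhs => rw [← T'.op_resDom_add_res u]
    rw [inner_add_right, hT'.form_resForm_right]
  rw [inner_sub_left, T'.inner_res_left_s2, hJg, hJ1u, hT.form_resForm_left, inner_add_left,
    inner_sub_right, inner_sub_left]
  ring

namespace FormQUE

variable {δ : ℝ} {J : H →L[ℂ] H'} {J' : H' →L[ℂ] H} {J1 : D →ₗ[ℂ] D'} {J1' : D' →ₗ[ℂ] D}

theorem norm_inner_res_comp_sub_le_s2 (hQUE : FormQUE E E' δ J J' J1 J1')
    (hT : IsAssociatedOp E T) (hT' : IsAssociatedOp E' T') (hδ : 0 ≤ δ) (g : H) (u : H') :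
    ‖⟪T'.res (J g) - J1 (hT.resForm g), u⟫_ℂ‖ ≤
      2 * δ * (E.enorm (hT.resForm g) + ‖T.op (T.resDom g)‖) * ‖u‖ := by
  set f := hT.resForm g
  set p := T.op (T.resDom g)
  set v := hT'.resForm u
  have hμ := E.enorm_nonneg f
  have hν : E'.enorm v ≤ ‖u‖ := hT'.enorm_resForm_le u
  have hv : ‖T'.res u‖ ≤ ‖u‖ := (E'.norm_le_enorm v).trans hν
  have hclose : ‖E.form f (J1' v) - E'.form (J1 f) v‖ ≤ δ * E.enorm f * ‖u‖ := by
    rw [norm_sub_rev]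
    exact (hQUE.close f v).trans (by gcongr)
  have hcompat_right : ‖⟪p, J' (T'.res u) - J1' v⟫_ℂ‖ ≤ ‖p‖ * (δ * ‖u‖) := by
    refine (norm_inner_le_norm _ _).trans ?_
    rw [norm_sub_rev]
    gcongr
    exact (hQUE.compat_right v).trans (by gcongr)
  have hadjoint : ‖⟪J p, T'.res u⟫_ℂ - ⟪p, J' (T'.res u)⟫_ℂ‖ ≤ δ * ‖p‖ * ‖u‖ :=
    (hQUE.almost_adjoint _ _).trans (by gcongr)
  have hcompat_left : ‖⟪J (T.res g) - J1 f, T'.res u⟫_ℂ‖ ≤ δ * E.enorm f * ‖u‖ := by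
    refine (norm_inner_le_norm _ _).trans ?_
    rw [norm_sub_rev]
    gcongr
    exact hQUE.compat_left f
  rw [hT.inner_res_comp_sub_eq hT' J J' J1 J1']
  exact norm_add₄_le.trans (by linarith)

theorem norm_res_comp_sub_J1_le (hQUE : FormQUE E E' δ J J' J1 J1')
    (hT : IsAssociatedOp E T) (hT' : IsAssociatedOp E' T') (hδ : 0 ≤ δ) (g : H) :
    ‖T'.res (J g) - J1 (hT.resForm g)‖ ≤
      2 * δ * (E.enorm (hT.resForm g) + ‖T.op (T.resDom g)‖) := by
  have := E.enorm_nonneg (hT.resForm g)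
  exact norm_le_of_forall_norm_inner_le (𝕜 := ℂ) _ (by positivity)
    (hQUE.norm_inner_res_comp_sub_le_s2 hT hT' hδ g)

theorem norm_res_comp_sub_le (hQUE : FormQUE E E' δ J J' J1 J1')
    (hT : IsAssociatedOp E T) (hT' : IsAssociatedOp E' T') (hδ : 0 ≤ δ) (g : H) :
    ‖T'.res (J g) - J (T.res g)‖ ≤ 4 * δ * ‖g‖ := by
  set μ := E.enorm (hT.resForm g)
  set b := ‖T.op (T.resDom g)‖
  have hμ : 0 ≤ μ := E.enorm_nonneg _
  have henergy : μ ^ 2 + b ^ 2 ≤ ‖g‖ ^ 2 := hT.enorm_resForm_sq_add_norm_op_sq_le g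
  -- Cauchy–Schwarz: `(3μ + 2b)² ≤ 13 (μ² + b²) ≤ 13 ‖g‖²`, and `√13 < 4`.
  have hcs : 3 * μ + 2 * b ≤ 4 * ‖g‖ := by
    nlinarith [sq_nonneg (2 * μ - 3 * b), norm_nonneg g, norm_nonneg (T.op (T.resDom g))]
  calc ‖T'.res (J g) - J (T.res g)‖
      ≤ ‖T'.res (J g) - J1 (hT.resForm g)‖ + ‖(J1 (hT.resForm g) : H') - J (T.res g)‖ :=
        norm_sub_le_norm_sub_add_norm_sub _ _ _
    _ ≤ 2 * δ * (μ + b) + δ * μ :=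
        add_le_add (hQUE.norm_res_comp_sub_J1_le hT hT' hδ g) (hQUE.compat_left _)
    _ = δ * (3 * μ + 2 * b) := by ring
    _ ≤ 4 * δ * ‖g‖ := by nlinarith

end FormQUE

end Intertwining

/-- [Post, Prp. 4.4.15].  If the energy forms `E` and `E'` are
`δ`-quasi-unitarily equivalent with identification operators `J`, `J'`, `J¹`, `J'¹`,
then the associated non-negative self-adjoint operators `Δ = T` and `Δ̃ = T'` are
`4δ`-operator-quasi-unitarily equivalent with identification operators `J` and `J'`;
in particular `‖(Δ̃+1)⁻¹ J - J (Δ+1)⁻¹‖ ≤ 4δ`. -/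
theorem formQUE_to_opQUE
    {H H' : Type*}
    [NormedAddCommGroup H] [InnerProductSpace ℂ H] [CompleteSpace H]
    [NormedAddCommGroup H'] [InnerProductSpace ℂ H'] [CompleteSpace H']
    {D : Submodule ℂ H} {D' : Submodule ℂ H'}
    (E : EnergyFormOn H D) (E' : EnergyFormOn H' D')
    (T : NonnegOp H) (T' : NonnegOp H')
    (hT : IsAssociatedOp E T) (hT' : IsAssociatedOp E' T')
    (δ : ℝ) (hδ : 0 ≤ δ)
    (J : H →L[ℂ] H') (J' : H' →L[ℂ] H)
    (J1 : D →ₗ[ℂ] D') (J1' : D' →ₗ[ℂ] D)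
    (hQUE : FormQUE E E' δ J J' J1 J1') :
    OpQUE T T' (4 * δ) J J' ∧ ‖T'.res.comp J - J.comp T.res‖ ≤ 4 * δ := by
  have h4δ : δ ≤ 4 * δ := by linarith
  have hintertwine : ‖T'.res.comp J - J.comp T.res‖ ≤ 4 * δ :=
    ContinuousLinearMap.opNorm_le_bound _ (by positivity) (hQUE.norm_res_comp_sub_le hT hT' hδ)
  refine ⟨⟨?_, ?_, ?_, ?_, hintertwine⟩, hintertwine⟩
  · exact ContinuousLinearMap.opNorm_le_bound _ (by positivity) fun f ↦
      (hQUE.bounded f).trans (by gcongr)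
  · exact (J.norm_adjoint_sub_le J' hδ hQUE.almost_adjoint).trans h4δ
  · exact (hT.opNorm_comp_res_le _ hδ hQUE.inv_left).trans h4δ
  · exact (hT'.opNorm_comp_res_le _ hδ hQUE.inv_right).trans h4δ

end
end

section
/- Transitivity of quasi-unitary equivalence for energy forms: let δ, δ̃ ∈ [0,1]. Suppose e and ẽ are δ-quasi-unitarily equivalent with identification operators J, J', J¹, J'¹, that ẽ and ê are δ̃-quasi-unitarily equivalent with identification operators J̃, J̃', J̃¹, J̃'¹, and that in addition ‖J¹f‖_ẽ ≤ (1+δ)‖f‖_e for all f ∈ H¹ and ‖J̃'¹w‖_ẽ ≤ (1+δ̃)‖w‖_ê for all w ∈ Ĥ¹. Then e and ê are 14(δ+δ̃)-quasi-unitarily equivalent with identification operators Ĵ := J̃∘J, Ĵ¹ := J̃¹∘J¹, Ĵ' := J'∘J̃', Ĵ'¹ := J'¹∘J̃'¹. -/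
open scoped ComplexConjugate

noncomputable section

/-! Each defect of the composed identification operators splits, by the triangle inequality,
into defects of the two given equivalences, transported through the remaining operators. The
operator norm of `J'` is not given, but almost-adjointness bounds it by `1 + 2δ`; the extra
bounds on `J¹` and `J̃'¹` control the form norms of the intermediate vectors `J¹f` and `J̃'¹w`,
at which the defects of the second equivalence are evaluated. Collecting the resulting
polynomials in `δ, δ̃` and using `δ, δ̃ ≤ 1` gives the constant `14`. -/

theorem EnergyFormOn.enorm_nonneg_s7 {H : Type*} [NormedAddCommGroup H] [InnerProductSpace ℂ H]
    [CompleteSpace H] {D : Submodule ℂ H} (E : EnergyFormOn H D) (f : D) : 0 ≤ E.enorm f :=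
  Real.sqrt_nonneg _

theorem norm_apply_le_of_almost_adjoint {𝕜 E F : Type*} [RCLike 𝕜]
    [NormedAddCommGroup E] [InnerProductSpace 𝕜 E] [NormedAddCommGroup F] [InnerProductSpace 𝕜 F]
    {δ : ℝ} (hδ : 0 ≤ δ) {J : E →L[𝕜] F} {J' : F →L[𝕜] E}
    (hJ : ∀ f, ‖J f‖ ≤ (1 + δ) * ‖f‖)
    (hJJ' : ∀ f u, ‖inner 𝕜 (J f) u - inner 𝕜 f (J' u)‖ ≤ δ * ‖f‖ * ‖u‖) (u : F) :
    ‖J' u‖ ≤ (1 + 2 * δ) * ‖u‖ := by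
  have key : ‖J' u‖ * ‖J' u‖ ≤ (1 + 2 * δ) * ‖u‖ * ‖J' u‖ :=
    calc ‖J' u‖ * ‖J' u‖ = ‖inner 𝕜 (J' u) (J' u)‖ := by
          rw [inner_self_eq_norm_sq_to_K, norm_pow, RCLike.norm_ofReal, abs_norm, sq]
      _ ≤ ‖inner 𝕜 (J (J' u)) u‖ + ‖inner 𝕜 (J (J' u)) u - inner 𝕜 (J' u) (J' u)‖ :=
          norm_le_insert _ _
      _ ≤ ‖J (J' u)‖ * ‖u‖ + δ * ‖J' u‖ * ‖u‖ :=
          add_le_add (norm_inner_le_norm _ _) (hJJ' _ _)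
      _ ≤ (1 + δ) * ‖J' u‖ * ‖u‖ + δ * ‖J' u‖ * ‖u‖ := by gcongr; exact hJ _
      _ = (1 + 2 * δ) * ‖u‖ * ‖J' u‖ := by ring
  rcases (norm_nonneg (J' u)).eq_or_lt with h | h
  · rw [← h]; positivity
  · exact le_of_mul_le_mul_right key h

section RoundTrip

variable {R E F G : Type*} [Ring R] [SeminormedAddCommGroup E] [SeminormedAddCommGroup F]
  [SeminormedAddCommGroup G] [Module R E] [Module R F] [Module R G]

theorem norm_sub_comp_le_of_approx {A : E →L[R] F} {B : F →L[R] G} {β b c : ℝ}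
    (hB : ∀ x, ‖B x‖ ≤ β * ‖x‖) (hβ : 0 ≤ β) {f : E} {v : F} {u : G}
    (hv : ‖v - A f‖ ≤ b) (hu : ‖u - B v‖ ≤ c) :
    ‖u - B (A f)‖ ≤ c + β * b :=
  calc ‖u - B (A f)‖ = ‖(u - B v) + B (v - A f)‖ := by rw [map_sub]; abel_nf
    _ ≤ ‖u - B v‖ + ‖B (v - A f)‖ := norm_add_le _ _
    _ ≤ c + β * b := add_le_add hu ((hB _).trans (by gcongr))

theorem norm_sub_roundTrip_comp_le {A : E →L[R] F} {A' : F →L[R] E} {B : F →L[R] G}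
    {B' : G →L[R] F} {α β β' a b c : ℝ}
    (hA' : ∀ x, ‖A' x‖ ≤ α * ‖x‖) (hα : 0 ≤ α) (hB : ∀ x, ‖B x‖ ≤ β * ‖x‖) (hβ : 0 ≤ β)
    (hB' : ∀ y, ‖B' y‖ ≤ β' * ‖y‖) (hβ' : 0 ≤ β') {f : E} {v : F}
    (hf : ‖f - A' (A f)‖ ≤ a) (hv : ‖v - A f‖ ≤ b) (hv' : ‖v - B' (B v)‖ ≤ c) :
    ‖f - A' (B' (B (A f)))‖ ≤ a + α * (b + c + β' * (β * b)) := by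
  have hAf : ‖A f - B' (B (A f))‖ ≤ b + c + β' * (β * b) :=
    calc ‖A f - B' (B (A f))‖ = ‖(A f - v) + (v - B' (B v)) + B' (B (v - A f))‖ := by
          simp only [map_sub]; abel_nf
      _ ≤ ‖A f - v‖ + ‖v - B' (B v)‖ + ‖B' (B (v - A f))‖ := norm_add₃_le
      _ ≤ b + c + β' * (β * b) := by
          gcongr
          · rwa [norm_sub_rev]
          · exact (hB' _).trans (by gcongr; exact (hB _).trans (by gcongr))
  calc ‖f - A' (B' (B (A f)))‖ = ‖(f - A' (A f)) + A' (A f - B' (B (A f)))‖ := by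
        rw [map_sub]; abel_nf
    _ ≤ ‖f - A' (A f)‖ + ‖A' (A f - B' (B (A f)))‖ := norm_add_le _ _
    _ ≤ a + α * (b + c + β' * (β * b)) := add_le_add hf ((hA' _).trans (by gcongr))

end RoundTrip

namespace FormQUE

variable {H H' H'' : Type*}
    [NormedAddCommGroup H] [InnerProductSpace ℂ H] [CompleteSpace H]
    [NormedAddCommGroup H'] [InnerProductSpace ℂ H'] [CompleteSpace H']
    [NormedAddCommGroup H''] [InnerProductSpace ℂ H''] [CompleteSpace H'']
    {D : Submodule ℂ H} {D' : Submodule ℂ H'} {D'' : Submodule ℂ H''}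
    {E : EnergyFormOn H D} {E' : EnergyFormOn H' D'} {E'' : EnergyFormOn H'' D''}
    {δ δt : ℝ} {J : H →L[ℂ] H'} {J' : H' →L[ℂ] H} {J1 : D →ₗ[ℂ] D'} {J1' : D' →ₗ[ℂ] D}
    {Jt : H' →L[ℂ] H''} {Jt' : H'' →L[ℂ] H'} {Jt1 : D' →ₗ[ℂ] D''} {Jt1' : D'' →ₗ[ℂ] D'}

theorem norm_adjoint_apply_le (h : FormQUE E E' δ J J' J1 J1') (hδ : 0 ≤ δ) (u : H') :
    ‖J' u‖ ≤ (1 + 2 * δ) * ‖u‖ :=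
  norm_apply_le_of_almost_adjoint hδ h.bounded h.almost_adjoint u

theorem comp_bounded (h1 : FormQUE E E' δ J J' J1 J1') (h2 : FormQUE E' E'' δt Jt Jt' Jt1 Jt1')
    (hδt : 0 ≤ δt) (f : H) : ‖Jt (J f)‖ ≤ (1 + δt) * (1 + δ) * ‖f‖ := by
  rw [mul_assoc]
  exact (h2.bounded _).trans (mul_le_mul_of_nonneg_left (h1.bounded f) (by linarith))

theorem comp_almost_adjoint (h1 : FormQUE E E' δ J J' J1 J1')
    (h2 : FormQUE E' E'' δt Jt Jt' Jt1 Jt1') (hδ : 0 ≤ δ) (hδt : 0 ≤ δt) (f : H) (w : H'') :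
    ‖inner ℂ (Jt (J f)) w - inner ℂ f (J' (Jt' w))‖ ≤
      (δt * (1 + δ) + δ * (1 + 2 * δt)) * ‖f‖ * ‖w‖ :=
  calc _ ≤ ‖inner ℂ (Jt (J f)) w - inner ℂ (J f) (Jt' w)‖
          + ‖inner ℂ (J f) (Jt' w) - inner ℂ f (J' (Jt' w))‖ :=
        norm_sub_le_norm_sub_add_norm_sub _ _ _
    _ ≤ δt * ((1 + δ) * ‖f‖) * ‖w‖ + δ * ‖f‖ * ((1 + 2 * δt) * ‖w‖) := by
        gcongr
        · exact (h2.almost_adjoint _ _).trans (by gcongr; exact h1.bounded f)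
        · exact (h1.almost_adjoint _ _).trans (by gcongr; exact h2.norm_adjoint_apply_le hδt w)
    _ = _ := by ring

theorem comp_inv_left (h1 : FormQUE E E' δ J J' J1 J1') (h2 : FormQUE E' E'' δt Jt Jt' Jt1 Jt1')
    (hJ1 : ∀ f : D, E'.enorm (J1 f) ≤ (1 + δ) * E.enorm f) (hδ : 0 ≤ δ) (hδt : 0 ≤ δt)
    (f : D) :
    ‖(f : H) - J' (Jt' (Jt (J f)))‖ ≤
      (δ + (1 + 2 * δ) * (δ + δt * (1 + δ) + (1 + 2 * δt) * ((1 + δt) * δ))) * E.enorm f :=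
  (norm_sub_roundTrip_comp_le (h1.norm_adjoint_apply_le hδ) (by linarith) h2.bounded
    (by linarith) (h2.norm_adjoint_apply_le hδt) (by linarith) (h1.inv_left f)
    (h1.compat_left f)
    ((h2.inv_left _).trans (mul_le_mul_of_nonneg_left (hJ1 f) hδt))).trans_eq (by ring)

theorem comp_inv_right (h1 : FormQUE E E' δ J J' J1 J1')
    (h2 : FormQUE E' E'' δt Jt Jt' Jt1 Jt1')
    (hJt1' : ∀ w : D'', E'.enorm (Jt1' w) ≤ (1 + δt) * E''.enorm w) (hδ : 0 ≤ δ) (hδt : 0 ≤ δt)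
    (w : D'') :
    ‖(w : H'') - Jt (J (J' (Jt' w)))‖ ≤
      (δt + (1 + δt) * (δt + δ * (1 + δt) + (1 + δ) * ((1 + 2 * δ) * δt))) * E''.enorm w :=
  (norm_sub_roundTrip_comp_le h2.bounded (by linarith) (h1.norm_adjoint_apply_le hδ)
    (by linarith) h1.bounded (by linarith) (h2.inv_right w) (h2.compat_right w)
    ((h1.inv_right _).trans (mul_le_mul_of_nonneg_left (hJt1' w) hδ))).trans_eq (by ring)

theorem comp_compat_left (h1 : FormQUE E E' δ J J' J1 J1')
    (h2 : FormQUE E' E'' δt Jt Jt' Jt1 Jt1')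
    (hJ1 : ∀ f : D, E'.enorm (J1 f) ≤ (1 + δ) * E.enorm f) (hδt : 0 ≤ δt) (f : D) :
    ‖(Jt1 (J1 f) : H'') - Jt (J f)‖ ≤ (δt * (1 + δ) + (1 + δt) * δ) * E.enorm f :=
  (norm_sub_comp_le_of_approx h2.bounded (by linarith) (h1.compat_left f)
    ((h2.compat_left _).trans (mul_le_mul_of_nonneg_left (hJ1 f) hδt))).trans_eq (by ring)

theorem comp_compat_right (h1 : FormQUE E E' δ J J' J1 J1')
    (h2 : FormQUE E' E'' δt Jt Jt' Jt1 Jt1')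
    (hJt1' : ∀ w : D'', E'.enorm (Jt1' w) ≤ (1 + δt) * E''.enorm w) (hδ : 0 ≤ δ) (w : D'') :
    ‖(J1' (Jt1' w) : H) - J' (Jt' w)‖ ≤ (δ * (1 + δt) + (1 + 2 * δ) * δt) * E''.enorm w :=
  (norm_sub_comp_le_of_approx (h1.norm_adjoint_apply_le hδ) (by linarith) (h2.compat_right w)
    ((h1.compat_right _).trans (mul_le_mul_of_nonneg_left (hJt1' w) hδ))).trans_eq (by ring)

theorem comp_close (h1 : FormQUE E E' δ J J' J1 J1') (h2 : FormQUE E' E'' δt Jt Jt' Jt1 Jt1')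
    (hJ1 : ∀ f : D, E'.enorm (J1 f) ≤ (1 + δ) * E.enorm f)
    (hJt1' : ∀ w : D'', E'.enorm (Jt1' w) ≤ (1 + δt) * E''.enorm w) (hδ : 0 ≤ δ) (hδt : 0 ≤ δt)
    (f : D) (w : D'') :
    ‖E''.form (Jt1 (J1 f)) w - E.form f (J1' (Jt1' w))‖ ≤
      (δt * (1 + δ) + δ * (1 + δt)) * E.enorm f * E''.enorm w :=
  calc _ ≤ ‖E''.form (Jt1 (J1 f)) w - E'.form (J1 f) (Jt1' w)‖
          + ‖E'.form (J1 f) (Jt1' w) - E.form f (J1' (Jt1' w))‖ :=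
        norm_sub_le_norm_sub_add_norm_sub _ _ _
    _ ≤ δt * ((1 + δ) * E.enorm f) * E''.enorm w + δ * E.enorm f * ((1 + δt) * E''.enorm w) := by
        have := E.enorm_nonneg_s7 f
        have := E''.enorm_nonneg_s7 w
        gcongr
        · exact (h2.close _ _).trans (by gcongr; exact hJ1 f)
        · exact (h1.close _ _).trans (by gcongr; exact hJt1' w)
    _ = _ := by ring

end FormQUE

/-- Transitivity of quasi-unitary equivalence for energy forms,
[Post, Prp. 4.4.16] with improved constant.  Let `δ, δ̃ ∈ [0,1]`.  If `e` and `ẽ` are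
`δ`-quasi-unitarily equivalent with identification operators `J, J', J¹, J'¹`, if `ẽ`
and `ê` are `δ̃`-quasi-unitarily equivalent with identification operators
`J̃, J̃', J̃¹, J̃'¹`, and if in addition `‖J¹f‖_ẽ ≤ (1+δ)‖f‖_e` and
`‖J̃'¹w‖_ẽ ≤ (1+δ̃)‖w‖_ê`, then `e` and `ê` are `14(δ+δ̃)`-quasi-unitarily equivalent
with identification operators `Ĵ = J̃∘J`, `Ĵ¹ = J̃¹∘J¹`, `Ĵ' = J'∘J̃'`,
`Ĵ'¹ = J'¹∘J̃'¹`. -/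
theorem formQUE_trans
    {H H' H'' : Type*}
    [NormedAddCommGroup H] [InnerProductSpace ℂ H] [CompleteSpace H]
    [NormedAddCommGroup H'] [InnerProductSpace ℂ H'] [CompleteSpace H']
    [NormedAddCommGroup H''] [InnerProductSpace ℂ H''] [CompleteSpace H'']
    {D : Submodule ℂ H} {D' : Submodule ℂ H'} {D'' : Submodule ℂ H''}
    (E : EnergyFormOn H D) (E' : EnergyFormOn H' D') (E'' : EnergyFormOn H'' D'')
    (δ δt : ℝ) (hδ0 : 0 ≤ δ) (hδ1 : δ ≤ 1) (hδt0 : 0 ≤ δt) (hδt1 : δt ≤ 1)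
    (J : H →L[ℂ] H') (J' : H' →L[ℂ] H) (J1 : D →ₗ[ℂ] D') (J1' : D' →ₗ[ℂ] D)
    (Jt : H' →L[ℂ] H'') (Jt' : H'' →L[ℂ] H') (Jt1 : D' →ₗ[ℂ] D'') (Jt1' : D'' →ₗ[ℂ] D')
    (h1 : FormQUE E E' δ J J' J1 J1')
    (h2 : FormQUE E' E'' δt Jt Jt' Jt1 Jt1')
    (hJ1 : ∀ f : D, E'.enorm (J1 f) ≤ (1 + δ) * E.enorm f)
    (hJt1' : ∀ w : D'', E'.enorm (Jt1' w) ≤ (1 + δt) * E''.enorm w) :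
    FormQUE E E'' (14 * (δ + δt)) (Jt.comp J) (J'.comp Jt')
      (Jt1.comp J1) (J1'.comp Jt1') := by
  have hδδt := mul_nonneg hδ0 hδt0
  refine ⟨fun f => ?_, fun f w => ?_, fun f => ?_, fun w => ?_, fun f => ?_, fun w => ?_,
    fun f w => ?_⟩
  · exact (h1.comp_bounded h2 hδt0 f).trans (by gcongr ?_ * _; nlinarith)
  · exact (h1.comp_almost_adjoint h2 hδ0 hδt0 f w).trans (by gcongr ?_ * _ * _; nlinarith)
  · refine (h1.comp_inv_left h2 hJ1 hδ0 hδt0 f).trans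
      (mul_le_mul_of_nonneg_right ?_ (E.enorm_nonneg_s7 f))
    nlinarith [mul_le_mul_of_nonneg_left hδt1 hδδt, mul_le_mul_of_nonneg_left hδ1 hδδt,
      mul_le_mul_of_nonneg_left hδ1 hδ0]
  · refine (h1.comp_inv_right h2 hJt1' hδ0 hδt0 w).trans
      (mul_le_mul_of_nonneg_right ?_ (E''.enorm_nonneg_s7 w))
    nlinarith [mul_le_mul_of_nonneg_left hδt1 hδδt, mul_le_mul_of_nonneg_left hδ1 hδδt,
      mul_le_mul_of_nonneg_left hδt1 hδt0]
  · exact (h1.comp_compat_left h2 hJ1 hδt0 f).trans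
      (mul_le_mul_of_nonneg_right (by nlinarith) (E.enorm_nonneg_s7 f))
  · exact (h1.comp_compat_right h2 hJt1' hδ0 w).trans
      (mul_le_mul_of_nonneg_right (by nlinarith) (E''.enorm_nonneg_s7 w))
  · exact (h1.comp_close h2 hJ1 hJt1' hδ0 hδt0 f w).trans (mul_le_mul_of_nonneg_right
      (mul_le_mul_of_nonneg_right (by nlinarith) (E.enorm_nonneg_s7 f)) (E''.enorm_nonneg_s7 w))

end
end

section
/- Functional calculus estimate: let e in H and ẽ in H̃ be δ-quasi-unitarily equivalent energy forms with associated operators Δ, Δ̃ and identification operator J : H → H̃ (or, more generally, assume ‖(Δ̃−z)⁻¹J − J(Δ−z)⁻¹‖ ≤ 4(1 + |z+1|/d(z,S))² δ for all z ∉ S := spec Δ ∪ spec Δ̃). Let U ⊂ ℂ be an open set whose boundary ∂U is locally the graph of a Lipschitz function and satisfies ∂U ∩ S = ∅, and let η be holomorphic on U such that C_η := (1/2π) ∫_{∂U} |η(z)| · 4(1 + |z+1|/d(z,S))² |dz| < ∞. Define η(Δ) := −(1/2πi) ∮_{∂U} η(z)(Δ−z)⁻¹ dz and η(Δ̃) :=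 −(1/2πi) ∮_{∂U} η(z)(Δ̃−z)⁻¹ dz (both integrals converging in operator norm). Then ‖η(Δ̃)J − Jη(Δ)‖ ≤ C_η δ. -/
open scoped ComplexConjugate

noncomputable section

open MeasureTheory

/-!
The difference `η(Δ̃)J − Jη(Δ)` is the contour integral of `η(z)((Δ̃−z)⁻¹J − J(Δ−z)⁻¹)`,
because composing with `J` on either side is a bounded linear map on operators and hence
commutes with the Bochner integral. Bounding the integrand pointwise by the resolvent
intertwining estimate and integrating gives `C_η δ`.
-/

namespace ContinuousLinearMap

variable {α E F : Type*} [MeasurableSpace α] {μ : Measure α}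
  [NormedAddCommGroup E] [NormedSpace ℂ E] [NormedAddCommGroup F] [NormedSpace ℂ F]

section

variable {G : Type*} [NormedAddCommGroup G] [NormedSpace ℂ G]

theorem integral_comp_right [CompleteSpace G] {B : α → F →L[ℂ] G} (hB : Integrable B μ)
    (J : E →L[ℂ] F) : (∫ a, B a ∂μ).comp J = ∫ a, (B a).comp J ∂μ :=
  (((compL ℂ E F G).flip J).integral_comp_comm hB).symm

theorem integral_comp_left [CompleteSpace F] [CompleteSpace G] {B : α → E →L[ℂ] F}
    (hB : Integrable B μ) (J : F →L[ℂ] G) : J.comp (∫ a, B a ∂μ) = ∫ a, J.comp (B a) ∂μ :=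
  ((compL ℂ E F G J).integral_comp_comm hB).symm

theorem integrable_comp_right {B : α → F →L[ℂ] G} (hB : Integrable B μ) (J : E →L[ℂ] F) :
    Integrable (fun a => (B a).comp J) μ :=
  ((compL ℂ E F G).flip J).integrable_comp hB

theorem integrable_comp_left {B : α → E →L[ℂ] F} (hB : Integrable B μ) (J : F →L[ℂ] G) :
    Integrable (fun a => J.comp (B a)) μ :=
  (compL ℂ E F G J).integrable_comp hB

end

theorem norm_integral_comp_sub_comp_integral_le [CompleteSpace E] [CompleteSpace F]
    {R : α → E →L[ℂ] E} {R' : α → F →L[ℂ] F} {b : α → ℝ} (J : E →L[ℂ] F)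
    (hR : Integrable R μ) (hR' : Integrable R' μ) (hb : Integrable b μ)
    (hRb : ∀ᵐ a ∂μ, ‖(R' a).comp J - J.comp (R a)‖ ≤ b a) :
    ‖(∫ a, R' a ∂μ).comp J - J.comp (∫ a, R a ∂μ)‖ ≤ ∫ a, b a ∂μ := by
  rw [integral_comp_right hR', integral_comp_left hR,
    ← integral_sub (integrable_comp_right hR' J) (integrable_comp_left hR J)]
  exact norm_integral_le_of_norm_le hb hRb

end ContinuousLinearMap

theorem norm_neg_one_div_two_pi_I :
    ‖-(1 / (2 * (Real.pi : ℂ) * Complex.I))‖ = 1 / (2 * Real.pi) := by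
  simp [Real.pi_pos.le]

theorem functional_calculus_estimate_general
    {H H' : Type*}
    [NormedAddCommGroup H] [InnerProductSpace ℂ H] [CompleteSpace H]
    [NormedAddCommGroup H'] [InnerProductSpace ℂ H'] [CompleteSpace H']
    (T : NonnegOp H) (T' : NonnegOp H') (δ : ℝ) (J : H →L[ℂ] H')
    (hres : ∀ z ∉ T.spec ∪ T'.spec, ∀ (Rz : H →L[ℂ] H) (Rz' : H' →L[ℂ] H'),
      IsResolventAt T z Rz → IsResolventAt T' z Rz' →
      ‖Rz'.comp J - J.comp Rz‖ ≤
        (4 * (1 + ‖z + 1‖ / Metric.infDist z (T.spec ∪ T'.spec)) ^ 2) * δ)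
    (U : Set ℂ) (hUS : frontier U ∩ (T.spec ∪ T'.spec) = ∅)
    (η : ℂ → ℂ)
    (γ γd : ℝ → ℂ)
    (hγrange : Set.range γ = frontier U)
    (R : ℂ → H →L[ℂ] H) (R' : ℂ → H' →L[ℂ] H')
    (hR : ∀ z ∉ T.spec, IsResolventAt T z (R z))
    (hR' : ∀ z ∉ T'.spec, IsResolventAt T' z (R' z))
    (hint : MeasureTheory.Integrable (fun t : ℝ => (η (γ t) * γd t) • R (γ t)))
    (hint' : MeasureTheory.Integrable (fun t : ℝ => (η (γ t) * γd t) • R' (γ t)))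
    (hCint : MeasureTheory.Integrable (fun t : ℝ => ‖η (γ t)‖ *
        (4 * (1 + ‖γ t + 1‖ / Metric.infDist (γ t) (T.spec ∪ T'.spec)) ^ 2) *
        ‖γd t‖))
    (Cη : ℝ)
    (hCη : Cη = (1 / (2 * Real.pi)) * ∫ t : ℝ, ‖η (γ t)‖ *
        (4 * (1 + ‖γ t + 1‖ / Metric.infDist (γ t) (T.spec ∪ T'.spec)) ^ 2) *
        ‖γd t‖)
    (A : H →L[ℂ] H) (A' : H' →L[ℂ] H')
    (hA : A = (-(1 / (2 * (Real.pi : ℂ) * Complex.I))) •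
        ∫ t : ℝ, (η (γ t) * γd t) • R (γ t))
    (hA' : A' = (-(1 / (2 * (Real.pi : ℂ) * Complex.I))) •
        ∫ t : ℝ, (η (γ t) * γd t) • R' (γ t)) :
    ‖A'.comp J - J.comp A‖ ≤ Cη * δ := by
  set S := T.spec ∪ T'.spec
  have hγS : ∀ t, γ t ∉ S := fun t hS =>
    Set.eq_empty_iff_forall_notMem.1 hUS (γ t) ⟨hγrange ▸ Set.mem_range_self t, hS⟩
  have hintegrand : ∀ t,
      ‖((η (γ t) * γd t) • R' (γ t)).comp J - J.comp ((η (γ t) * γd t) • R (γ t))‖ ≤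
        ‖η (γ t)‖ * (4 * (1 + ‖γ t + 1‖ / Metric.infDist (γ t) S) ^ 2) * ‖γd t‖ * δ := by
    intro t
    have hresγ := hres (γ t) (hγS t) _ _ (hR _ fun h => hγS t (.inl h))
      (hR' _ fun h => hγS t (.inr h))
    rw [ContinuousLinearMap.smul_comp, ContinuousLinearMap.comp_smul, ← smul_sub, norm_smul,
      norm_mul]
    calc ‖η (γ t)‖ * ‖γd t‖ * ‖(R' (γ t)).comp J - J.comp (R (γ t))‖
        ≤ ‖η (γ t)‖ * ‖γd t‖ * ((4 * (1 + ‖γ t + 1‖ / Metric.infDist (γ t) S) ^ 2) * δ) := by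
          gcongr
      _ = _ := by ring
  have hintegral := ContinuousLinearMap.norm_integral_comp_sub_comp_integral_le J hint hint'
    (hCint.mul_const δ) (ae_of_all _ hintegrand)
  rw [integral_mul_const] at hintegral
  rw [hA, hA', ContinuousLinearMap.smul_comp, ContinuousLinearMap.comp_smul, ← smul_sub,
    norm_smul, norm_neg_one_div_two_pi_I, hCη, mul_assoc]
  gcongr

/-- Functional calculus estimate, [Post, Thm. 4.2.9] refined.
Assume the resolvent intertwining bound `‖(Δ̃−z)⁻¹J − J(Δ−z)⁻¹‖ ≤ 4(1+|z+1|/d(z,S))² δ`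
for all `z ∉ S = spec Δ ∪ spec Δ̃` (which holds in particular if the corresponding
energy forms are `δ`-quasi-unitarily equivalent).  Let `U ⊆ ℂ` be open with boundary
`∂U` disjoint from `S`, parametrised by a differentiable curve `γ` (with derivative
`γd`), and let `η` be holomorphic on `U`.  With
`η(Δ) = −(1/2πi) ∮_{∂U} η(z)(Δ−z)⁻¹ dz` and `η(Δ̃)` defined likewise (the integrals
converging in operator norm), and
`C_η = (1/2π) ∫_{∂U} |η(z)| · 4(1+|z+1|/d(z,S))² |dz| < ∞`, one has
`‖η(Δ̃)J − Jη(Δ)‖ ≤ C_η δ`. -/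
theorem functional_calculus_estimate
    {H H' : Type*}
    [NormedAddCommGroup H] [InnerProductSpace ℂ H] [CompleteSpace H]
    [NormedAddCommGroup H'] [InnerProductSpace ℂ H'] [CompleteSpace H']
    (T : NonnegOp H) (T' : NonnegOp H') (δ : ℝ) (hδ : 0 ≤ δ) (J : H →L[ℂ] H')
    (hres : ∀ z ∉ T.spec ∪ T'.spec, ∀ (Rz : H →L[ℂ] H) (Rz' : H' →L[ℂ] H'),
      IsResolventAt T z Rz → IsResolventAt T' z Rz' →
      ‖Rz'.comp J - J.comp Rz‖ ≤
        (4 * (1 + ‖z + 1‖ / Metric.infDist z (T.spec ∪ T'.spec)) ^ 2) * δ)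
    (U : Set ℂ) (hU : IsOpen U) (hUS : frontier U ∩ (T.spec ∪ T'.spec) = ∅)
    (η : ℂ → ℂ) (hη : DifferentiableOn ℂ η U)
    (γ γd : ℝ → ℂ) (hγ : ∀ t, HasDerivAt γ (γd t) t)
    (hγrange : Set.range γ = frontier U)
    (R : ℂ → H →L[ℂ] H) (R' : ℂ → H' →L[ℂ] H')
    (hR : ∀ z ∉ T.spec, IsResolventAt T z (R z))
    (hR' : ∀ z ∉ T'.spec, IsResolventAt T' z (R' z))
    (hint : MeasureTheory.Integrable (fun t : ℝ => (η (γ t) * γd t) • R (γ t)))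
    (hint' : MeasureTheory.Integrable (fun t : ℝ => (η (γ t) * γd t) • R' (γ t)))
    (hCint : MeasureTheory.Integrable (fun t : ℝ => ‖η (γ t)‖ *
        (4 * (1 + ‖γ t + 1‖ / Metric.infDist (γ t) (T.spec ∪ T'.spec)) ^ 2) *
        ‖γd t‖))
    (Cη : ℝ)
    (hCη : Cη = (1 / (2 * Real.pi)) * ∫ t : ℝ, ‖η (γ t)‖ *
        (4 * (1 + ‖γ t + 1‖ / Metric.infDist (γ t) (T.spec ∪ T'.spec)) ^ 2) *
        ‖γd t‖)
    (A : H →L[ℂ] H) (A' : H' →L[ℂ] H')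
    (hA : A = (-(1 / (2 * (Real.pi : ℂ) * Complex.I))) •
        ∫ t : ℝ, (η (γ t) * γd t) • R (γ t))
    (hA' : A' = (-(1 / (2 * (Real.pi : ℂ) * Complex.I))) •
        ∫ t : ℝ, (η (γ t) * γd t) • R' (γ t)) :
    ‖A'.comp J - J.comp A‖ ≤ Cη * δ :=
  functional_calculus_estimate_general T T' δ J hres U hUS η γ γd hγrange R R' hR hR' hint hint'
    hCint Cη hCη A A' hA hA'

end
end
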